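/- Assume the IFS is a fractal of unity with angles θ_k = 2πN_k/M and the fixed points p_1,…,p_n are not all equal; set V := M / gcd(N_1,…,N_n,M). (i) If x is a nonempty focal word such that p_x is an extremal point of F and the pair (∅,x) ∈ Frm(p_x) is irreducible, then |x| ≤ V. (ii) If e is an extremal point of F and (b,x) ∈ Frm(e) is irreducible, then |b| + |x| ≤ 2V. -/

import Mathlib

open Complex

noncomputable section

/-- Composition of IFS maps along a finite word: `T_a = T_{a₁} ∘ ⋯ ∘ T_{a_L}`. -/
def wordMap {n : ℕ} (T : Fin n → ℂ → ℂ) : List (Fin n) → ℂ → ℂ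
  | [] => id
  | k :: a => T k ∘ wordMap T a

/-- Product of factors along a finite word: `φ_a = φ_{a₁} ⋯ φ_{a_L}`. -/
def wordFactor {n : ℕ} (φ : Fin n → ℂ) (a : List (Fin n)) : ℂ :=
  (a.map φ).prod

/-- `e` is an extremal point of `S`: it belongs to `S` and does not lie in the open
segment between any two distinct points of `S`. -/
def IsExtremal (S : Set ℂ) (e : ℂ) : Prop :=
  e ∈ S ∧ ¬ ∃ s₁ s₂ : ℂ, s₁ ∈ S ∧ s₂ ∈ S ∧ s₁ ≠ s₂ ∧
    ∃ t : ℝ, 0 < t ∧ t < 1 ∧ e = t • s₁ + (1 - t) • s₂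

/-!
A focal word `w` acts as the homothety `z ↦ p_w + r (z - p_w)` with `0 < r < 1`, so if an
extremal point has the form `T_u (T_w z)` with `z ∈ F`, then `z = p_w`: otherwise the
extremal point would be a proper convex combination of the distinct points `T_u z` and
`T_u p_w` of `F`. In a fractal of unity a word is focal as soon as the sum of its `N_k` is
divisible by `M`. All `N_k` are multiples of `d = gcd(N₁,…,Nₙ,M)`, so among the `V + 1`
prefix sums of the first `V = M / d` letters of a word two agree modulo `M`: every word of
length at least `V` contains a focal subword ending within its first `V` letters. Cutting
the form there shortens any form `(b, x)` with `|b| > V` or `|x| > V`.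
-/

def IsFocal {n : ℕ} (φ : Fin n → ℂ) (x : List (Fin n)) : Prop :=
  ∃ r : ℝ, 0 < r ∧ wordFactor φ x = (r : ℂ)

theorem IsExtremal.eq_of_eq_smul_add {S : Set ℂ} {e s₁ s₂ : ℂ} (he : IsExtremal S e)
    (hs₁ : s₁ ∈ S) (hs₂ : s₂ ∈ S) {t : ℝ} (ht₀ : 0 < t) (ht₁ : t < 1)
    (h : e = t • s₁ + (1 - t) • s₂) : s₁ = s₂ := by
  by_contra hne
  exact he.2 ⟨s₁, s₂, hs₁, hs₂, hne, t, ht₀, ht₁, h⟩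

theorem ContractingWith.mem_of_isFixedPt {α : Type*} [MetricSpace α] [CompleteSpace α]
    {K : NNReal} {f : α → α} (hf : ContractingWith K f) {s : Set α} (hs : IsClosed s)
    (hsne : s.Nonempty) (hfs : Set.MapsTo f s s) {x : α} (hx : Function.IsFixedPt f x) :
    x ∈ s := by
  obtain ⟨y, hy⟩ := hsne
  have : Nonempty α := ⟨y⟩
  rw [hf.fixedPoint_unique hx]
  exact hs.mem_of_tendsto (hf.tendsto_iterate_fixedPoint y)
    (Filter.Eventually.of_forall fun m => hfs.iterate m hy)

theorem Nat.exists_lt_le_modEq (f : ℕ → ℕ) {V : ℕ} (hV : 0 < V) :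
    ∃ i j, i < j ∧ j ≤ V ∧ f i ≡ f j [MOD V] := by
  have hmaps : Set.MapsTo (fun j => f j % V) (Finset.range (V + 1)) (Finset.range V) :=
    fun j _ => Finset.mem_coe.2 (Finset.mem_range.2 (Nat.mod_lt _ hV))
  obtain ⟨i, hi, j, hj, hij, hmod⟩ :=
    Finset.exists_ne_map_eq_of_card_lt_of_maps_to (by simp) hmaps
  rw [Finset.mem_range] at hi hj
  rcases hij.lt_or_gt with h | h
  · exact ⟨i, j, h, by omega, hmod⟩
  · exact ⟨j, i, h, by omega, hmod.symm⟩

theorem List.exists_infix_dvd_sum_map {α : Type*} (N : α → ℕ) {d M : ℕ} (hM : 0 < M)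
    (hdM : d ∣ M) (hdN : ∀ k, d ∣ N k) (a : List α) (ha : M / d ≤ a.length) :
    ∃ u w v, a = u ++ w ++ v ∧ w ≠ [] ∧ u.length + w.length ≤ M / d ∧
      M ∣ (w.map N).sum := by
  have hV : 0 < M / d := Nat.div_pos (Nat.le_of_dvd hM hdM) (Nat.pos_of_dvd_of_pos hdM hM)
  set S : ℕ → ℕ := fun j => ((a.take j).map N).sum
  have hdS : ∀ j, d ∣ S j := fun j =>
    List.dvd_sum fun x hx => by obtain ⟨k, -, rfl⟩ := List.mem_map.1 hx; exact hdN k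
  obtain ⟨i, j, hij, hjV, hmod⟩ := Nat.exists_lt_le_modEq (fun j => S j / d) hV
  have hSM : S i ≡ S j [MOD M] := by
    simpa only [Nat.mul_div_cancel' (hdS _), Nat.mul_div_cancel' hdM] using hmod.mul_left' d
  have htake : a.take j = a.take i ++ (a.take j).drop i := by
    conv_lhs => rw [← List.take_append_drop i (a.take j)]
    rw [List.take_take, min_eq_left hij.le]
  have hSj : S j = S i + (((a.take j).drop i).map N).sum := by
    show ((a.take j).map N).sum = _
    conv_lhs => rw [htake, List.map_append, List.sum_append]
  refine ⟨a.take i, (a.take j).drop i, a.drop j, ?_, ?_, ?_, ?_⟩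
  · rw [← htake, List.take_append_drop]
  · rw [← List.length_pos_iff, List.length_drop, List.length_take]; omega
  · simp only [List.length_drop, List.length_take]; omega
  · have := (Nat.modEq_iff_dvd' (by omega)).1 hSM
    rwa [hSj, Nat.add_sub_cancel_left] at this

section WordMaps

variable {n : ℕ} {p φ : Fin n → ℂ} {T : Fin n → ℂ → ℂ}

theorem wordFactor_cons (k : Fin n) (a : List (Fin n)) :
    wordFactor φ (k :: a) = φ k * wordFactor φ a := by
  simp [wordFactor]

theorem wordMap_append (a b : List (Fin n)) (z : ℂ) :
    wordMap T (a ++ b) z = wordMap T a (wordMap T b z) := by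
  induction a with
  | nil => rfl
  | cons k a ih => simp [wordMap, ih]

theorem wordFactor_ne_zero (hφ : ∀ k, φ k ≠ 0) (a : List (Fin n)) : wordFactor φ a ≠ 0 :=
  List.prod_ne_zero fun h => by
    obtain ⟨k, -, hk⟩ := List.mem_map.1 h
    exact hφ k hk

theorem norm_wordFactor_lt_one (hφ : ∀ k, ‖φ k‖ < 1) {a : List (Fin n)} (ha : a ≠ []) :
    ‖wordFactor φ a‖ < 1 := by
  induction a with
  | nil => exact absurd rfl ha
  | cons k a ih =>
    rw [wordFactor_cons, norm_mul]
    rcases eq_or_ne a [] with rfl | ha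
    · simpa [wordFactor] using hφ k
    · exact mul_lt_one_of_nonneg_of_lt_one_left (norm_nonneg _) (hφ k) (ih ha).le

theorem isFocal_of_dvd {ζ : ℂ} {M : ℕ} (hζ : ζ ^ M = 1) {N : Fin n → ℕ}
    (hφ₀ : ∀ k, φ k ≠ 0) (hφ : ∀ k, φ k = ‖φ k‖ * ζ ^ N k) {a : List (Fin n)}
    (ha : M ∣ (a.map N).sum) : IsFocal φ a := by
  have hpolar : ∀ a : List (Fin n),
      wordFactor φ a = ((a.map (‖φ ·‖)).prod : ℝ) * ζ ^ (a.map N).sum := by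
    intro a
    induction a with
    | nil => simp [wordFactor]
    | cons k a ih =>
      rw [wordFactor_cons, ih, hφ k]
      push_cast [List.map_cons, List.prod_cons, List.sum_cons, pow_add]
      ring
  obtain ⟨m, hm⟩ := ha
  refine ⟨(a.map (‖φ ·‖)).prod, List.prod_pos fun r hr => ?_, ?_⟩
  · obtain ⟨k, -, rfl⟩ := List.mem_map.1 hr
    exact norm_pos_iff.2 (hφ₀ k)
  · rw [hpolar, hm, pow_mul, hζ, one_pow, mul_one]

theorem mapsTo_wordMap {F : Set ℂ} (hF : ∀ k, Set.MapsTo (T k) F F) (a : List (Fin n)) :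
    Set.MapsTo (wordMap T a) F F := by
  induction a with
  | nil => exact Set.mapsTo_id F
  | cons k a ih => exact (hF k).comp ih

variable (hT : ∀ k z, T k z = p k + φ k * (z - p k))
include hT

theorem wordMap_sub (a : List (Fin n)) (z z' : ℂ) :
    wordMap T a z - wordMap T a z' = wordFactor φ a * (z - z') := by
  induction a with
  | nil => simp [wordMap, wordFactor]
  | cons k a ih =>
    simp only [wordMap, Function.comp_apply, hT, wordFactor_cons]
    linear_combination φ k * ih

theorem wordMap_smul_add (a : List (Fin n)) (s₁ s₂ : ℂ) (t : ℝ) :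
    wordMap T a (t • s₁ + (1 - t) • s₂) = t • wordMap T a s₁ + (1 - t) • wordMap T a s₂ := by
  have h₁ := wordMap_sub hT a s₁ (t • s₁ + (1 - t) • s₂)
  have h₂ := wordMap_sub hT a s₂ (t • s₁ + (1 - t) • s₂)
  simp only [Complex.real_smul] at *
  push_cast at *
  linear_combination (-(t : ℂ)) * h₁ - (1 - t) * h₂

theorem wordMap_injective (hφ : ∀ k, φ k ≠ 0) (a : List (Fin n)) :
    Function.Injective (wordMap T a) := fun z z' h => by
  simpa [sub_eq_zero, h, wordFactor_ne_zero hφ a] using (wordMap_sub hT a z z').symm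

theorem contractingWith_wordMap (hφ : ∀ k, ‖φ k‖ < 1) {a : List (Fin n)} (ha : a ≠ []) :
    ContractingWith ‖wordFactor φ a‖₊ (wordMap T a) :=
  ⟨norm_wordFactor_lt_one hφ ha, LipschitzWith.of_dist_le_mul fun z z' => by
    rw [dist_eq_norm, dist_eq_norm, wordMap_sub hT, norm_mul, coe_nnnorm]⟩

theorem wordMap_eq_smul_add_of_isFixedPt {w : List (Fin n)} {r : ℝ}
    (hw : wordFactor φ w = r) {q : ℂ} (hq : wordMap T w q = q) (z : ℂ) :
    wordMap T w z = r • z + (1 - r) • q := by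
  have := wordMap_sub hT w z q
  rw [hq, hw] at this
  simp only [Complex.real_smul]; push_cast
  linear_combination this

theorem mem_of_wordMap_isFixedPt (hφ : ∀ k, ‖φ k‖ < 1) {F : Set ℂ} (hFc : IsClosed F)
    (hFne : F.Nonempty) (hF : ∀ k, Set.MapsTo (T k) F F) {a : List (Fin n)} (ha : a ≠ [])
    {q : ℂ} (hq : wordMap T a q = q) : q ∈ F :=
  (contractingWith_wordMap hT hφ ha).mem_of_isFixedPt hFc hFne (mapsTo_wordMap hF a) hq

theorem IsExtremal.eq_of_eq_wordMap_wordMap (hφ : ∀ k, 0 < ‖φ k‖ ∧ ‖φ k‖ < 1) {F : Set ℂ}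
    (hF : ∀ k, Set.MapsTo (T k) F F) {e : ℂ} (hE : IsExtremal F e) {u w : List (Fin n)}
    (hw : w ≠ []) (hfoc : IsFocal φ w) {q : ℂ} (hq : wordMap T w q = q) (hqF : q ∈ F)
    {z : ℂ} (hz : z ∈ F) (he : e = wordMap T u (wordMap T w z)) : z = q := by
  obtain ⟨r, hr, hwr⟩ := hfoc
  have hr₁ : r < 1 := by
    simpa [hwr, abs_of_pos hr] using norm_wordFactor_lt_one (fun k => (hφ k).2) hw
  rw [wordMap_eq_smul_add_of_isFixedPt hT hwr hq, wordMap_smul_add hT] at he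
  exact wordMap_injective hT (fun k => norm_pos_iff.1 (hφ k).1) u <|
    hE.eq_of_eq_smul_add (mapsTo_wordMap hF u hz) (mapsTo_wordMap hF u hqF) hr hr₁ he

theorem IsExtremal.exists_form_length_le (hφ : ∀ k, 0 < ‖φ k‖ ∧ ‖φ k‖ < 1) {F : Set ℂ}
    (hFc : IsClosed F) (hFne : F.Nonempty) (hF : ∀ k, Set.MapsTo (T k) F F) {M d : ℕ}
    (hM : 0 < M) (N : Fin n → ℕ) (hdM : d ∣ M) (hdN : ∀ k, d ∣ N k)
    (hfocal : ∀ w, M ∣ (w.map N).sum → IsFocal φ w)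
    (pp : List (Fin n) → ℂ) (hpp : ∀ x, x ≠ [] → wordMap T x (pp x) = pp x)
    {e : ℂ} (hE : IsExtremal F e) {c a : List (Fin n)} {z : ℂ} (hz : z ∈ F)
    (he : e = wordMap T c (wordMap T a z)) (ha : M / d ≤ a.length) :
    ∃ c' y, y ≠ [] ∧ IsFocal φ y ∧ e = wordMap T c' (pp y) ∧
      c'.length + y.length ≤ c.length + M / d := by
  obtain ⟨u, w, v, rfl, hw, hlen, hdvd⟩ := List.exists_infix_dvd_sum_map N hM hdM hdN a ha
  have he' : e = wordMap T (c ++ u) (wordMap T w (wordMap T v z)) := by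
    rw [he, wordMap_append, wordMap_append, wordMap_append]
  have hwF : pp w ∈ F := mem_of_wordMap_isFixedPt hT (fun k => (hφ k).2) hFc hFne hF hw (hpp w hw)
  have hvz : wordMap T v z = pp w :=
    hE.eq_of_eq_wordMap_wordMap hT hφ hF hw (hfocal w hdvd) (hpp w hw) hwF
      (mapsTo_wordMap hF v hz) he'
  refine ⟨c ++ u, w, hw, hfocal w hdvd, ?_, ?_⟩
  · rw [he', hvz, hpp w hw]
  · rw [List.length_append]; omega

end WordMaps

theorem Complex.exp_two_pi_mul_div_mul_I (N M : ℕ) :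
    exp ((((2 * Real.pi * N) / M : ℝ) : ℂ) * I) = exp (2 * Real.pi * I / M) ^ N := by
  rw [← exp_nat_mul]
  congr 1
  push_cast
  ring

theorem irreducible_form_length_bounds_general {n : ℕ} (p φ : Fin n → ℂ)
    (hφ : ∀ k, 0 < ‖φ k‖ ∧ ‖φ k‖ < 1)
    (T : Fin n → ℂ → ℂ) (hT : ∀ k z, T k z = p k + φ k * (z - p k))
    (F : Set ℂ) (hFne : F.Nonempty) (hFc : IsCompact F)
    (hFinv : F = ⋃ k, T k '' F)
    (M : ℕ) (hM : 1 ≤ M) (N : Fin n → ℕ)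
    (hunity : ∀ k, φ k = (‖φ k‖ : ℂ) *
      Complex.exp ((((2 * Real.pi * (N k : ℝ)) / (M : ℝ) : ℝ) : ℂ) * Complex.I))
    (pp : List (Fin n) → ℂ) (hpp : ∀ x, x ≠ [] → wordMap T x (pp x) = pp x) :
    (∀ x : List (Fin n), x ≠ [] →
      (∃ r : ℝ, 0 < r ∧ wordFactor φ x = (r : ℂ)) →
      IsExtremal F (pp x) →
      (¬ ∃ (c y : List (Fin n)), y ≠ [] ∧
        (∃ r : ℝ, 0 < r ∧ wordFactor φ y = (r : ℂ)) ∧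
        pp x = wordMap T c (pp y) ∧ c.length + y.length < x.length) →
      x.length ≤ M / Nat.gcd (Finset.univ.gcd N) M) ∧
    (∀ (e : ℂ) (b x : List (Fin n)), IsExtremal F e → x ≠ [] →
      (∃ r : ℝ, 0 < r ∧ wordFactor φ x = (r : ℂ)) →
      e = wordMap T b (pp x) →
      (¬ ∃ (c y : List (Fin n)), y ≠ [] ∧
        (∃ r : ℝ, 0 < r ∧ wordFactor φ y = (r : ℂ)) ∧
        e = wordMap T c (pp y) ∧ c.length + y.length < b.length + x.length) →
      b.length + x.length ≤ 2 * (M / Nat.gcd (Finset.univ.gcd N) M)) := by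
  have hF : ∀ k, Set.MapsTo (T k) F F := fun k => Set.mapsTo_iff_image_subset.2
    ((Set.subset_iUnion (fun k => T k '' F) k).trans hFinv.symm.subset)
  have hfocal : ∀ w : List (Fin n), M ∣ (w.map N).sum → IsFocal φ w :=
    fun w => isFocal_of_dvd (Complex.isPrimitiveRoot_exp M (by omega)).pow_eq_one
      (fun k => norm_pos_iff.1 (hφ k).1)
      (fun k => by rw [← Complex.exp_two_pi_mul_div_mul_I]; exact hunity k)
  have hdN : ∀ k, Nat.gcd (Finset.univ.gcd N) M ∣ N k :=
    fun k => (Nat.gcd_dvd_left _ M).trans (Finset.gcd_dvd (Finset.mem_univ k))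
  have shorten := @IsExtremal.exists_form_length_le n p φ T hT hφ F hFc.isClosed hFne hF M _
    hM N (Nat.gcd_dvd_right _ M) hdN hfocal pp hpp
  have hmem : ∀ x, x ≠ [] → pp x ∈ F := fun x hx =>
    mem_of_wordMap_isFixedPt hT (fun k => (hφ k).2) hFc.isClosed hFne hF hx (hpp x hx)
  refine ⟨fun x hx _ hE hirr => ?_, fun e b x hE hx _ hbx hirr => ?_⟩
  · by_contra! hx_gt
    obtain ⟨c, y, hy, hyf, he, hcy⟩ :=
      shorten hE (c := []) (hmem x hx) (by simp [wordMap, hpp x hx]) hx_gt.le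
    exact hirr ⟨c, y, hy, hyf, he, by simp at hcy; omega⟩
  · have hx_le : x.length ≤ M / Nat.gcd (Finset.univ.gcd N) M := by
      by_contra! hx_gt
      obtain ⟨c, y, hy, hyf, he, hcy⟩ :=
        shorten hE (hmem x hx) (by rw [hpp x hx]; exact hbx) hx_gt.le
      exact hirr ⟨c, y, hy, hyf, he, by omega⟩
    have hb_le : b.length ≤ M / Nat.gcd (Finset.univ.gcd N) M := by
      by_contra! hb_gt
      obtain ⟨c, y, hy, hyf, he, hcy⟩ := shorten hE (c := []) (hmem x hx) hbx hb_gt.le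
      exact hirr ⟨c, y, hy, hyf, he, by simp at hcy; omega⟩
    omega

/-- in a fractal of unity with angles `θ_k = 2πN_k/M`, not all fixed points
equal, and `V := M / gcd(N₁,…,Nₙ,M)`: (i) a focal extremal point `p_x` whose form `(∅,x)`
is irreducible has `|x| ≤ V`; (ii) an extremal point `e` with irreducible form `(b,x)`
has `|b| + |x| ≤ 2V`. -/
theorem irreducible_form_length_bounds {n : ℕ} (hn : 1 ≤ n) (p φ : Fin n → ℂ)
    (hφ : ∀ k, 0 < ‖φ k‖ ∧ ‖φ k‖ < 1)
    (T : Fin n → ℂ → ℂ) (hT : ∀ k z, T k z = p k + φ k * (z - p k))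
    (F : Set ℂ) (hFne : F.Nonempty) (hFc : IsCompact F)
    (hFinv : F = ⋃ k, T k '' F)
    (hne : ∃ i j, p i ≠ p j)
    (M : ℕ) (hM : 1 ≤ M) (N : Fin n → ℕ) (hN : ∀ k, N k < M)
    (hunity : ∀ k, φ k = (‖φ k‖ : ℂ) *
      Complex.exp ((((2 * Real.pi * (N k : ℝ)) / (M : ℝ) : ℝ) : ℂ) * Complex.I))
    (pp : List (Fin n) → ℂ) (hpp : ∀ x, x ≠ [] → wordMap T x (pp x) = pp x) :
    (∀ x : List (Fin n), x ≠ [] →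
      (∃ r : ℝ, 0 < r ∧ wordFactor φ x = (r : ℂ)) →
      IsExtremal F (pp x) →
      (¬ ∃ (c y : List (Fin n)), y ≠ [] ∧
        (∃ r : ℝ, 0 < r ∧ wordFactor φ y = (r : ℂ)) ∧
        pp x = wordMap T c (pp y) ∧ c.length + y.length < x.length) →
      x.length ≤ M / Nat.gcd (Finset.univ.gcd N) M) ∧
    (∀ (e : ℂ) (b x : List (Fin n)), IsExtremal F e → x ≠ [] →
      (∃ r : ℝ, 0 < r ∧ wordFactor φ x = (r : ℂ)) →
      e = wordMap T b (pp x) →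
      (¬ ∃ (c y : List (Fin n)), y ≠ [] ∧
        (∃ r : ℝ, 0 < r ∧ wordFactor φ y = (r : ℂ)) ∧
        e = wordMap T c (pp y) ∧ c.length + y.length < b.length + x.length) →
      b.length + x.length ≤ 2 * (M / Nat.gcd (Finset.univ.gcd N) M)) :=
  irreducible_form_length_bounds_general p φ hφ T hT F hFne hFc hFinv M hM N hunity pp hpp
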